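/- On ℝ² × ℝ² (coordinates (x, y, ξ, η)), let p(x,y,ξ,η) = (ξ² + η²)·I₂ + diag(−1 − λ, −4 − λ) + χ̃(y)·R(x,ξ) + λ·φ(y)·ψ(x)·I₂, a 2×2 real symmetric matrix-valued symbol, where: R(x,ξ) = R₀(x) + ξ·R₁(x) with R₀, R₁ smooth, compactly supported, real symmetric 2×2 matrix-valued; ψ, φ, χ̃ ∈ C_c^∞(ℝ; [0,1]); χ̃ = 1 on a neighborhood of 0; y·φ′(y) < 0 for every y ≠ 0 in the interior of supp φ; φ′(y) ≠ 0 for every y ∈ supp χ̃′; and x·ψ′(x) ≤ 0 for all x. Let g_x, g_y ∈ C_c^∞(ℝ; [0,1]) be such that g_x = 1 on a neighborhood of supp R₀ ∪ supp R₁, ψ = 1 on a neighborhood of supp g_x, x·g_x′(x) ≤ 0 for all x, g_y = 1 on a neighborhood of supp χ̃, supp g_y ⊆ supp φ, and φ′(y) ≠ 0 for every y ∈ supp g_y′. Then for every sufficiently large λ there exists δ₀ > 0 such that for all δ ∈ (0, δ₀] and all (x, y, ξ, η) with det p(x,y,ξ,η) = 0, one has {p, (yη + δ·xξ·(1 − g_x(x)g_y(y)))·I₂}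 ⪰ (2η² + 2δ·ξ²·(1 − g_x(x)g_y(y)) + |y·φ′(y)|·ψ(x))·I₂. -/

import Mathlib

/-- 2×2 real matrices. -/
abbrev M2 := Matrix (Fin 2) (Fin 2) ℝ

/-- The matrix-valued Schrödinger symbol
`p = (ξ² + η²)I₂ + diag(−1−λ, −4−λ) + χ̃(y)(R₀(x) + ξR₁(x)) + λφ(y)ψ(x)I₂`. -/
noncomputable def pSym (R₀ R₁ : ℝ → M2) (ψ φ χt : ℝ → ℝ) (lam : ℝ)
    (x y ξ η : ℝ) : M2 :=
  (ξ ^ 2 + η ^ 2) • (1 : M2) + Matrix.diagonal ![-1 - lam, -4 - lam]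
    + χt y • (R₀ x + ξ • R₁ x) + (lam * φ y * ψ x) • (1 : M2)

/-- The matrix-valued Poisson bracket
`{p, g} = ∂_ξ p ∂_x g + ∂_η p ∂_y g − ∂_x p ∂_ξ g − ∂_y p ∂_η g` of a matrix-valued symbol
`p` and a scalar symbol `g` on `ℝ² × ℝ²`, coordinates `(x, y, ξ, η)`. -/
noncomputable def matPB (p : ℝ → ℝ → ℝ → ℝ → M2) (g : ℝ → ℝ → ℝ → ℝ → ℝ)
    (x y ξ η : ℝ) : M2 :=
  Matrix.of fun i j =>
    deriv (fun s => p x y s η i j) ξ * deriv (fun s => g s y ξ η) x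
      + deriv (fun s => p x y ξ s i j) η * deriv (fun s => g x s ξ η) y
      - deriv (fun s => p s y ξ η i j) x * deriv (fun s => g x y s η) ξ
      - deriv (fun s => p x s ξ η i j) y * deriv (fun s => g x y ξ s) η

/-! ### Auxiliary lemmas -/

lemma pSym_entry (R₀ R₁ : ℝ → M2) (ψ φ χt : ℝ → ℝ) (lam x y ξ η : ℝ) (i j : Fin 2) :
    pSym R₀ R₁ ψ φ χt lam x y ξ η i j
      = (ξ ^ 2 + η ^ 2) * (1 : M2) i j + Matrix.diagonal ![-1 - lam, -4 - lam] i j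
        + χt y * (R₀ x i j + ξ * R₁ x i j) + lam * φ y * ψ x * (1 : M2) i j := by
  simp [pSym, Matrix.add_apply, Matrix.smul_apply, smul_eq_mul]
  ring

section DerivLemmas

variable (R₀ R₁ : ℝ → M2) (ψ φ χt : ℝ → ℝ) (lam x y ξ η : ℝ) (i j : Fin 2)

lemma deriv_p_xi :
    deriv (fun s => pSym R₀ R₁ ψ φ χt lam x y s η i j) ξ
      = 2 * ξ * (1 : M2) i j + χt y * R₁ x i j := by
  rw [show (fun s => pSym R₀ R₁ ψ φ χt lam x y s η i j)
      = fun s => (s ^ 2 + η ^ 2) * (1 : M2) i j + Matrix.diagonal ![-1 - lam, -4 - lam] i j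
        + χt y * (R₀ x i j + s * R₁ x i j) + lam * φ y * ψ x * (1 : M2) i j
    from funext fun s => pSym_entry R₀ R₁ ψ φ χt lam x y s η i j]
  have h1 : HasDerivAt (fun s : ℝ => (s ^ 2 + η ^ 2) * (1 : M2) i j)
      (2 * ξ * (1 : M2) i j) ξ := by
    simpa using ((hasDerivAt_pow 2 ξ).add_const (η ^ 2)).mul_const ((1 : M2) i j)
  have h2 : HasDerivAt (fun s : ℝ => χt y * (R₀ x i j + s * R₁ x i j))
      (χt y * R₁ x i j) ξ := by
    simpa using (((hasDerivAt_id' ξ).mul_const (R₁ x i j)).const_add (R₀ x i j)).const_mul (χt y)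
  have h := (((h1.add_const (Matrix.diagonal ![-1 - lam, -4 - lam] i j)).add h2).add_const
    (lam * φ y * ψ x * (1 : M2) i j))
  exact h.deriv

lemma deriv_p_eta :
    deriv (fun s => pSym R₀ R₁ ψ φ χt lam x y ξ s i j) η
      = 2 * η * (1 : M2) i j := by
  rw [show (fun s => pSym R₀ R₁ ψ φ χt lam x y ξ s i j)
      = fun s => (ξ ^ 2 + s ^ 2) * (1 : M2) i j + Matrix.diagonal ![-1 - lam, -4 - lam] i j
        + χt y * (R₀ x i j + ξ * R₁ x i j) + lam * φ y * ψ x * (1 : M2) i j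
    from funext fun s => pSym_entry R₀ R₁ ψ φ χt lam x y ξ s i j]
  have h1 : HasDerivAt (fun s : ℝ => (ξ ^ 2 + s ^ 2) * (1 : M2) i j)
      (2 * η * (1 : M2) i j) η := by
    simpa using ((hasDerivAt_pow 2 η).const_add (ξ ^ 2)).mul_const ((1 : M2) i j)
  have h := (((h1.add_const (Matrix.diagonal ![-1 - lam, -4 - lam] i j)).add_const
      (χt y * (R₀ x i j + ξ * R₁ x i j))).add_const (lam * φ y * ψ x * (1 : M2) i j))
  rw [h.deriv]

lemma deriv_p_x (hR₀ : ∀ i j, ContDiff ℝ (⊤ : ℕ∞) fun x => R₀ x i j)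
    (hR₁ : ∀ i j, ContDiff ℝ (⊤ : ℕ∞) fun x => R₁ x i j)
    (hψ : ContDiff ℝ (⊤ : ℕ∞) ψ) :
    deriv (fun s => pSym R₀ R₁ ψ φ χt lam s y ξ η i j) x
      = χt y * (deriv (fun x => R₀ x i j) x + ξ * deriv (fun x => R₁ x i j) x)
        + lam * φ y * deriv ψ x * (1 : M2) i j := by
  rw [show (fun s => pSym R₀ R₁ ψ φ χt lam s y ξ η i j)
      = fun s => (ξ ^ 2 + η ^ 2) * (1 : M2) i j + Matrix.diagonal ![-1 - lam, -4 - lam] i j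
        + χt y * (R₀ s i j + ξ * R₁ s i j) + lam * φ y * ψ s * (1 : M2) i j
    from funext fun s => pSym_entry R₀ R₁ ψ φ χt lam s y ξ η i j]
  have hR0' : HasDerivAt (fun s => R₀ s i j) (deriv (fun x => R₀ x i j) x) x :=
    (((hR₀ i j).differentiable (by simp)) x).hasDerivAt
  have hR1' : HasDerivAt (fun s => R₁ s i j) (deriv (fun x => R₁ x i j) x) x :=
    (((hR₁ i j).differentiable (by simp)) x).hasDerivAt
  have hψ' : HasDerivAt ψ (deriv ψ x) x := ((hψ.differentiable (by simp)) x).hasDerivAt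
  have h2 : HasDerivAt (fun s => χt y * (R₀ s i j + ξ * R₁ s i j))
      (χt y * (deriv (fun x => R₀ x i j) x + ξ * deriv (fun x => R₁ x i j) x)) x :=
    (hR0'.add (hR1'.const_mul ξ)).const_mul (χt y)
  have h3 : HasDerivAt (fun s => lam * φ y * ψ s * (1 : M2) i j)
      (lam * φ y * deriv ψ x * (1 : M2) i j) x :=
    (hψ'.const_mul (lam * φ y)).mul_const ((1 : M2) i j)
  have h := ((((hasDerivAt_const x ((ξ ^ 2 + η ^ 2) * (1 : M2) i j)).add_const
      (Matrix.diagonal ![-1 - lam, -4 - lam] i j)).add h2).add h3)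
  refine h.deriv.trans ?_; ring

lemma deriv_p_y (hφ : ContDiff ℝ (⊤ : ℕ∞) φ) (hχt : ContDiff ℝ (⊤ : ℕ∞) χt) :
    deriv (fun s => pSym R₀ R₁ ψ φ χt lam x s ξ η i j) y
      = deriv χt y * (R₀ x i j + ξ * R₁ x i j)
        + lam * deriv φ y * ψ x * (1 : M2) i j := by
  rw [show (fun s => pSym R₀ R₁ ψ φ χt lam x s ξ η i j)
      = fun s => (ξ ^ 2 + η ^ 2) * (1 : M2) i j + Matrix.diagonal ![-1 - lam, -4 - lam] i j
        + χt s * (R₀ x i j + ξ * R₁ x i j) + lam * φ s * ψ x * (1 : M2) i j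
    from funext fun s => pSym_entry R₀ R₁ ψ φ χt lam x s ξ η i j]
  have hφ' : HasDerivAt φ (deriv φ y) y := ((hφ.differentiable (by simp)) y).hasDerivAt
  have hχ' : HasDerivAt χt (deriv χt y) y := ((hχt.differentiable (by simp)) y).hasDerivAt
  have h2 : HasDerivAt (fun s => χt s * (R₀ x i j + ξ * R₁ x i j))
      (deriv χt y * (R₀ x i j + ξ * R₁ x i j)) y := hχ'.mul_const _
  have h3 : HasDerivAt (fun s => lam * φ s * ψ x * (1 : M2) i j)
      (lam * deriv φ y * ψ x * (1 : M2) i j) y := by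
    have := ((hφ'.const_mul lam).mul_const (ψ x)).mul_const ((1 : M2) i j)
    simpa [mul_assoc] using this
  have h := ((((hasDerivAt_const y ((ξ ^ 2 + η ^ 2) * (1 : M2) i j)).add_const
      (Matrix.diagonal ![-1 - lam, -4 - lam] i j)).add h2).add h3)
  refine h.deriv.trans ?_; ring

end DerivLemmas

section DerivG

variable (gx gy : ℝ → ℝ) (δ x y ξ η : ℝ)

lemma deriv_g_x (hgx : ContDiff ℝ (⊤ : ℕ∞) gx) :
    deriv (fun s => y * η + δ * s * ξ * (1 - gx s * gy y)) x
      = δ * ξ * (1 - gx x * gy y) - δ * x * ξ * (deriv gx x * gy y) := by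
  have hgx' : HasDerivAt gx (deriv gx x) x := ((hgx.differentiable (by simp)) x).hasDerivAt
  have hin : HasDerivAt (fun s => 1 - gx s * gy y) (-(deriv gx x * gy y)) x := by
    simpa using (hgx'.mul_const (gy y)).const_sub 1
  have h := ((((hasDerivAt_id' x).const_mul δ).mul_const ξ).mul hin).const_add (y * η)
  refine h.deriv.trans ?_; ring

lemma deriv_g_y (hgy : ContDiff ℝ (⊤ : ℕ∞) gy) :
    deriv (fun s => s * η + δ * x * ξ * (1 - gx x * gy s)) y
      = η - δ * x * ξ * (gx x * deriv gy y) := by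
  have hgy' : HasDerivAt gy (deriv gy y) y := ((hgy.differentiable (by simp)) y).hasDerivAt
  have hin : HasDerivAt (fun s => 1 - gx x * gy s) (-(gx x * deriv gy y)) y := by
    simpa using (hgy'.const_mul (gx x)).const_sub 1
  have h := ((hasDerivAt_id' y).mul_const η).add (hin.const_mul (δ * x * ξ))
  refine h.deriv.trans ?_; ring

lemma deriv_g_xi :
    deriv (fun s => y * η + δ * x * s * (1 - gx x * gy y)) ξ
      = δ * x * (1 - gx x * gy y) := by
  have h := ((((hasDerivAt_id' ξ).const_mul (δ * x)).mul_const (1 - gx x * gy y))).const_add (y * η)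
  rw [show (fun s => y * η + δ * x * s * (1 - gx x * gy y))
      = fun s => y * η + δ * x * s * (1 - gx x * gy y) from rfl]
  rw [h.deriv]; ring

lemma deriv_g_eta :
    deriv (fun s => y * s + δ * x * ξ * (1 - gx x * gy y)) η = y := by
  have h := (((hasDerivAt_id' η).const_mul y)).add_const (δ * x * ξ * (1 - gx x * gy y))
  rw [h.deriv]; ring

end DerivG

lemma deriv_eq_zero_of_locally_one {f : ℝ → ℝ} {U : Set ℝ} (hU : IsOpen U)
    (h1 : ∀ z ∈ U, f z = 1) {x : ℝ} (hx : x ∈ U) : deriv f x = 0 := by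
  have h : f =ᶠ[nhds x] fun _ => 1 :=
    Filter.eventually_of_mem (hU.mem_nhds hx) h1
  rw [h.deriv_eq, deriv_const]

lemma deriv_entry_eq_zero {R : ℝ → M2} {x : ℝ} (hx : x ∉ tsupport R) (i j : Fin 2) :
    deriv (fun x => R x i j) x = 0 := by
  have h : (fun x => R x i j) =ᶠ[nhds x] fun _ => 0 := by
    filter_upwards [(isClosed_tsupport R).isOpen_compl.mem_nhds hx] with z hz
    rw [image_eq_zero_of_notMem_tsupport hz]; rfl
  rw [h.deriv_eq, deriv_const]

lemma exists_abs_bound (f : ℝ → ℝ) (hf : Continuous f) (hc : HasCompactSupport f) :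
    ∃ C, 0 ≤ C ∧ ∀ x, |f x| ≤ C := by
  obtain ⟨C, hC⟩ := hf.bounded_above_of_compact_support hc
  exact ⟨max C 0, le_max_right _ _,
    fun x => le_trans (by simpa [Real.norm_eq_abs] using hC x) (le_max_left _ _)⟩

lemma exists_entry_bound (R : ℝ → M2) (hR : ∀ i j, ContDiff ℝ (⊤ : ℕ∞) fun x => R x i j)
    (hc : HasCompactSupport R) : ∃ C, 0 ≤ C ∧ ∀ x i j, |R x i j| ≤ C := by
  have key : ∀ i j : Fin 2, ∃ C, 0 ≤ C ∧ ∀ x, |R x i j| ≤ C := fun i j =>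
    exists_abs_bound _ ((hR i j).continuous) (hc.comp_left (g := fun M : M2 => M i j) rfl)
  obtain ⟨C00, -, h00⟩ := key 0 0
  obtain ⟨C01, -, h01⟩ := key 0 1
  obtain ⟨C10, -, h10⟩ := key 1 0
  obtain ⟨C11, -, h11⟩ := key 1 1
  refine ⟨max 0 (max (max C00 C01) (max C10 C11)), le_max_left _ _, fun x i j => ?_⟩
  fin_cases i <;> fin_cases j
  · exact (h00 x).trans (by simp [le_max_iff, le_refl])
  · exact (h01 x).trans (by simp [le_max_iff, le_refl])
  · exact (h10 x).trans (by simp [le_max_iff, le_refl])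
  · exact (h11 x).trans (by simp [le_max_iff, le_refl])

lemma exists_pos_lb {h : ℝ → ℝ} (hc : Continuous h) {S : Set ℝ} (hS : IsCompact S)
    (hpos : ∀ y ∈ S, 0 < h y) : ∃ c, 0 < c ∧ ∀ y ∈ S, c ≤ h y := by
  rcases S.eq_empty_or_nonempty with rfl | hne
  · exact ⟨1, one_pos, by simp⟩
  · obtain ⟨y0, hy0, hmin⟩ := hS.exists_isMinOn hne hc.continuousOn
    exact ⟨h y0, hpos y0 hy0, hmin⟩

lemma yphi_nonpos (φ : ℝ → ℝ) (hφc : Continuous φ)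
    (hφ01 : ∀ y, φ y ∈ Set.Icc (0 : ℝ) 1)
    (hφ' : ∀ y ∈ interior (tsupport φ), y ≠ 0 → y * deriv φ y < 0) :
    ∀ y, y * deriv φ y ≤ 0 := by
  intro y
  by_cases hy0 : y = 0
  · simp [hy0]
  by_cases hin : y ∈ interior (tsupport φ)
  · exact (hφ' y hin hy0).le
  · have hφy : φ y = 0 := by
      have hclos : y ∈ closure (tsupport φ)ᶜ := by
        rw [closure_compl]; exact hin
      have heq0 : Set.EqOn φ (fun _ => 0) (tsupport φ)ᶜ :=
        fun z hz => image_eq_zero_of_notMem_tsupport hz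
      have heq : Set.EqOn φ (fun _ => 0) (closure (tsupport φ)ᶜ) :=
        heq0.closure hφc continuous_const
      exact heq hclos
    have hmin : IsLocalMin φ y :=
      Filter.Eventually.of_forall fun z => by rw [hφy]; exact (hφ01 z).1
    rw [hmin.deriv_eq_zero, mul_zero]

set_option maxHeartbeats 1000000 in
lemma xi_eta_bound (R₀ R₁ : ℝ → M2) (ψ φ χt : ℝ → ℝ) (lam : ℝ) (B₀ B₁ : ℝ)
    (hB₀ : ∀ x i j, |R₀ x i j| ≤ B₀) (hB₁ : ∀ x i j, |R₁ x i j| ≤ B₁)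
    (hψ01 : ∀ x, ψ x ∈ Set.Icc (0 : ℝ) 1) (hφ01 : ∀ y, φ y ∈ Set.Icc (0 : ℝ) 1)
    (hχt01 : ∀ y, χt y ∈ Set.Icc (0 : ℝ) 1) (hlam : 0 ≤ lam)
    (x y ξ η : ℝ) (hdet : (pSym R₀ R₁ ψ φ χt lam x y ξ η).det = 0) :
    ξ ^ 2 + η ^ 2 ≤ lam + 4 + 2 * B₀ + 2 * B₁ * |ξ| := by
  obtain ⟨v, hv0, hv⟩ := (Matrix.exists_mulVec_eq_zero_iff).2 hdet
  have hq0 := congrFun hv 0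
  have hq1 := congrFun hv 1
  simp only [pSym, Matrix.mulVec, dotProduct, Fin.sum_univ_two, Matrix.add_apply,
    Matrix.smul_apply, Matrix.one_apply, smul_eq_mul, Matrix.diagonal_apply, Pi.zero_apply,
    Matrix.cons_val_zero, Matrix.cons_val_one, Matrix.head_cons] at hq0 hq1
  norm_num at hq0 hq1
  set w0 := v 0 with hw0d
  set w1 := v 1 with hw1d
  have hw : 0 < w0 ^ 2 + w1 ^ 2 := by
    obtain ⟨i, hi⟩ := Function.ne_iff.1 hv0
    fin_cases i
    · have h0 : 0 < w0 ^ 2 := lt_of_le_of_ne (sq_nonneg w0) (Ne.symm (pow_ne_zero 2 hi))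
      nlinarith [sq_nonneg w1]
    · have h0 : 0 < w1 ^ 2 := lt_of_le_of_ne (sq_nonneg w1) (Ne.symm (pow_ne_zero 2 hi))
      nlinarith [sq_nonneg w0]
  set m := B₀ + B₁ * |ξ| with hmd
  have hm : 0 ≤ m := by
    have := hB₀ x 0 0
    have := abs_nonneg (R₀ x 0 0); have := abs_nonneg (R₁ x 0 0)
    have := hB₁ x 0 0
    have := abs_nonneg ξ
    nlinarith [mul_le_mul_of_nonneg_left (hB₁ x 0 0) (abs_nonneg ξ)]
  have he : ∀ i j, |R₀ x i j + ξ * R₁ x i j| ≤ m := by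
    intro i j
    calc |R₀ x i j + ξ * R₁ x i j| ≤ |R₀ x i j| + |ξ * R₁ x i j| := abs_add_le _ _
      _ = |R₀ x i j| + |ξ| * |R₁ x i j| := by rw [abs_mul]
      _ ≤ B₀ + B₁ * |ξ| := by
          have h2 : |ξ| * |R₁ x i j| ≤ |ξ| * B₁ :=
            mul_le_mul_of_nonneg_left (hB₁ x i j) (abs_nonneg ξ)
          have := hB₀ x i j
          nlinarith
  obtain ⟨l00, r00⟩ := abs_le.1 (he 0 0)
  obtain ⟨l01, r01⟩ := abs_le.1 (he 0 1)
  obtain ⟨l10, r10⟩ := abs_le.1 (he 1 0)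
  obtain ⟨l11, r11⟩ := abs_le.1 (he 1 1)
  have hQ : (R₀ x 0 0 + ξ * R₁ x 0 0) * w0 * w0 + (R₀ x 0 1 + ξ * R₁ x 0 1) * w0 * w1
      + (R₀ x 1 0 + ξ * R₁ x 1 0) * w1 * w0 + (R₀ x 1 1 + ξ * R₁ x 1 1) * w1 * w1
      ≥ -(2 * m * (w0 ^ 2 + w1 ^ 2)) := by
    nlinarith [mul_nonneg (by linarith : (0:ℝ) ≤ m + (R₀ x 0 0 + ξ * R₁ x 0 0)) (sq_nonneg w0),
      mul_nonneg (by linarith : (0:ℝ) ≤ m + (R₀ x 1 1 + ξ * R₁ x 1 1)) (sq_nonneg w1),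
      mul_nonneg (by linarith : (0:ℝ) ≤ m + (R₀ x 0 1 + ξ * R₁ x 0 1)) (sq_nonneg (w0 + w1)),
      mul_nonneg (by linarith : (0:ℝ) ≤ m - (R₀ x 0 1 + ξ * R₁ x 0 1)) (sq_nonneg (w0 - w1)),
      mul_nonneg (by linarith : (0:ℝ) ≤ m + (R₀ x 1 0 + ξ * R₁ x 1 0)) (sq_nonneg (w0 + w1)),
      mul_nonneg (by linarith : (0:ℝ) ≤ m - (R₀ x 1 0 + ξ * R₁ x 1 0)) (sq_nonneg (w0 - w1))]
  have hχQ : χt y * ((R₀ x 0 0 + ξ * R₁ x 0 0) * w0 * w0 + (R₀ x 0 1 + ξ * R₁ x 0 1) * w0 * w1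
      + (R₀ x 1 0 + ξ * R₁ x 1 0) * w1 * w0 + (R₀ x 1 1 + ξ * R₁ x 1 1) * w1 * w1)
      ≥ -(2 * m * (w0 ^ 2 + w1 ^ 2)) := by
    obtain ⟨hχ0, hχ1⟩ := hχt01 y
    rcases le_or_gt 0 ((R₀ x 0 0 + ξ * R₁ x 0 0) * w0 * w0 + (R₀ x 0 1 + ξ * R₁ x 0 1) * w0 * w1
      + (R₀ x 1 0 + ξ * R₁ x 1 0) * w1 * w0 + (R₀ x 1 1 + ξ * R₁ x 1 1) * w1 * w1) with hq | hq
    · nlinarith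
    · nlinarith
  have hE : (ξ ^ 2 + η ^ 2 - lam + lam * (φ y * ψ x)) * (w0 ^ 2 + w1 ^ 2)
      - w0 ^ 2 - 4 * w1 ^ 2
      + χt y * ((R₀ x 0 0 + ξ * R₁ x 0 0) * w0 * w0 + (R₀ x 0 1 + ξ * R₁ x 0 1) * w0 * w1
      + (R₀ x 1 0 + ξ * R₁ x 1 0) * w1 * w0 + (R₀ x 1 1 + ξ * R₁ x 1 1) * w1 * w1) = 0 := by
    linear_combination w0 * hq0 + w1 * hq1
  have hφψ : 0 ≤ φ y * ψ x := mul_nonneg (hφ01 y).1 (hψ01 x).1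
  have hfac : (ξ ^ 2 + η ^ 2 - lam - 4 - 2 * m) * (w0 ^ 2 + w1 ^ 2) ≤ 0 := by
    nlinarith [mul_nonneg (mul_nonneg hlam hφψ) hw.le]
  have hfin : ξ ^ 2 + η ^ 2 - lam - 4 - 2 * m ≤ 0 := by
    by_contra hpos
    push_neg at hpos
    nlinarith
  rw [hmd] at hfin
  linarith

set_option maxHeartbeats 1000000 in
lemma psd_aux (s t m : ℝ) (R : M2) (hR : R.IsSymm) (hm : ∀ i j, |t * R i j| ≤ m)
    (hs : 2 * m ≤ s) : (s • (1 : M2) + t • R).PosSemidef := by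
  rw [Matrix.posSemidef_iff_dotProduct_mulVec]
  constructor
  · apply Matrix.IsHermitian.ext
    intro i j
    simp only [Matrix.add_apply, Matrix.smul_apply, smul_eq_mul, star_trivial]
    rw [hR.apply i j, show (1 : M2) j i = (1 : M2) i j from by simp [Matrix.one_apply, eq_comm]]
  · intro v
    simp only [dotProduct, Matrix.mulVec, Fin.sum_univ_two, Matrix.add_apply,
      Matrix.smul_apply, Matrix.one_apply, smul_eq_mul, Pi.star_apply, star_trivial]
    norm_num
    obtain ⟨l00, r00⟩ := abs_le.1 (hm 0 0)
    obtain ⟨l01, r01⟩ := abs_le.1 (hm 0 1)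
    obtain ⟨l10, r10⟩ := abs_le.1 (hm 1 0)
    obtain ⟨l11, r11⟩ := abs_le.1 (hm 1 1)
    nlinarith [mul_nonneg (by linarith : (0:ℝ) ≤ m + t * R 0 0) (sq_nonneg (v 0)),
      mul_nonneg (by linarith : (0:ℝ) ≤ m + t * R 1 1) (sq_nonneg (v 1)),
      mul_nonneg (by linarith : (0:ℝ) ≤ m + t * R 0 1) (sq_nonneg (v 0 + v 1)),
      mul_nonneg (by linarith : (0:ℝ) ≤ m - t * R 0 1) (sq_nonneg (v 0 - v 1)),
      mul_nonneg (by linarith : (0:ℝ) ≤ m + t * R 1 0) (sq_nonneg (v 0 + v 1)),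
      mul_nonneg (by linarith : (0:ℝ) ≤ m - t * R 1 0) (sq_nonneg (v 0 - v 1)),
      mul_nonneg (by linarith : (0:ℝ) ≤ s - 2 * m) (by positivity : (0:ℝ) ≤ (v 0)^2 + (v 1)^2)]

set_option maxHeartbeats 1000000 in
lemma lamkey_aux (K B₀ B₁ c₁ lam S : ℝ) (hK0 : 0 ≤ K) (hB₀0 : 0 ≤ B₀) (hB₁0 : 0 ≤ B₁)
    (hc₁ : 0 < c₁) (hS0 : 0 ≤ S) (hs : S ^ 2 = lam + 4 + 2 * B₀)
    (hmul : c₁ ^ 2 * (2 + (4 + 2 * B₀))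
      + (4 * (2 * K * B₀ + 4 * K * B₁ ^ 2) * c₁ + 4 * (2 * K * B₁) ^ 2 + 1) ≤ c₁ ^ 2 * lam) :
    2 * K * (B₀ + (2 * B₁ + S) * B₁) ≤ (lam - 1) * c₁ / 2 := by
  nlinarith [sq_nonneg (c₁ * S - 4 * K * B₁), hs, hS0, hc₁, hmul, hK0, hB₀0, hB₁0,
    mul_nonneg hK0 hB₁0, mul_nonneg hK0 hB₀0, mul_nonneg hc₁.le hS0, sq_nonneg c₁]


set_option maxHeartbeats 4000000 in
/-- Escape function for the matrix-valued Schrödinger symbol: for all sufficiently large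
`λ` there is `δ₀ > 0` such that for `0 < δ ≤ δ₀`, on `det p = 0`,
`{p, (yη + δxξ(1 − gₓ(x)g_y(y)))I₂} ⪰ (2η² + 2δξ²(1 − gₓ(x)g_y(y)) + |yφ′(y)|ψ(x))I₂`. -/
theorem stmt_15 (R₀ R₁ : ℝ → M2)
    (hR₀ : ∀ i j, ContDiff ℝ (⊤ : ℕ∞) fun x => R₀ x i j)
    (hR₁ : ∀ i j, ContDiff ℝ (⊤ : ℕ∞) fun x => R₁ x i j)
    (hR₀c : HasCompactSupport R₀) (hR₁c : HasCompactSupport R₁)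
    (hR₀s : ∀ x, (R₀ x).IsSymm) (hR₁s : ∀ x, (R₁ x).IsSymm)
    (ψ φ χt : ℝ → ℝ)
    (hψ : ContDiff ℝ (⊤ : ℕ∞) ψ) (hφ : ContDiff ℝ (⊤ : ℕ∞) φ)
    (hχt : ContDiff ℝ (⊤ : ℕ∞) χt)
    (hψc : HasCompactSupport ψ) (hφc : HasCompactSupport φ)
    (hχtc : HasCompactSupport χt)
    (hψ01 : ∀ x, ψ x ∈ Set.Icc (0 : ℝ) 1) (hφ01 : ∀ y, φ y ∈ Set.Icc (0 : ℝ) 1)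
    (hχt01 : ∀ y, χt y ∈ Set.Icc (0 : ℝ) 1)
    (hχt1 : ∀ᶠ y in nhds (0 : ℝ), χt y = 1)
    (hφ' : ∀ y ∈ interior (tsupport φ), y ≠ 0 → y * deriv φ y < 0)
    (hφχ : ∀ y ∈ tsupport (deriv χt), deriv φ y ≠ 0)
    (hψ' : ∀ x : ℝ, x * deriv ψ x ≤ 0)
    (gx gy : ℝ → ℝ)
    (hgx : ContDiff ℝ (⊤ : ℕ∞) gx) (hgy : ContDiff ℝ (⊤ : ℕ∞) gy)
    (hgxc : HasCompactSupport gx) (hgyc : HasCompactSupport gy)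
    (hgx01 : ∀ x, gx x ∈ Set.Icc (0 : ℝ) 1) (hgy01 : ∀ y, gy y ∈ Set.Icc (0 : ℝ) 1)
    (hgx1 : ∃ U : Set ℝ, IsOpen U ∧ tsupport R₀ ∪ tsupport R₁ ⊆ U ∧ ∀ x ∈ U, gx x = 1)
    (hψ1 : ∃ U : Set ℝ, IsOpen U ∧ tsupport gx ⊆ U ∧ ∀ x ∈ U, ψ x = 1)
    (hgx' : ∀ x : ℝ, x * deriv gx x ≤ 0)
    (hgy1 : ∃ U : Set ℝ, IsOpen U ∧ tsupport χt ⊆ U ∧ ∀ y ∈ U, gy y = 1)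
    (hgyφ : tsupport gy ⊆ tsupport φ)
    (hgy' : ∀ y ∈ tsupport (deriv gy), deriv φ y ≠ 0) :
    ∃ lam0 : ℝ, ∀ lam : ℝ, lam0 ≤ lam →
      ∃ δ₀ : ℝ, 0 < δ₀ ∧ ∀ δ : ℝ, 0 < δ → δ ≤ δ₀ →
        ∀ x y ξ η : ℝ, (pSym R₀ R₁ ψ φ χt lam x y ξ η).det = 0 →
          (matPB (pSym R₀ R₁ ψ φ χt lam)
              (fun x y ξ η => y * η + δ * x * ξ * (1 - gx x * gy y)) x y ξ η
            - (2 * η ^ 2 + 2 * δ * ξ ^ 2 * (1 - gx x * gy y)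
                + |y * deriv φ y| * ψ x) • (1 : M2)).PosSemidef := by
  classical
  obtain ⟨B₀, hB₀0, hB₀⟩ := exists_entry_bound R₀ hR₀ hR₀c
  obtain ⟨B₁, hB₁0, hB₁⟩ := exists_entry_bound R₁ hR₁ hR₁c
  obtain ⟨K, hK0, hK⟩ := exists_abs_bound (fun y => y * deriv χt y)
    (continuous_id.mul (hχt.continuous_deriv (mod_cast le_top)))
    (HasCompactSupport.mul_left hχtc.deriv)
  obtain ⟨K₂, hK₂0, hK₂⟩ := exists_abs_bound (deriv gy)
    (hgy.continuous_deriv (mod_cast le_top)) hgyc.deriv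
  obtain ⟨X, hX0, hX⟩ := exists_abs_bound (fun x => x * gx x)
    (continuous_id.mul hgx.continuous) (HasCompactSupport.mul_left hgxc)
  obtain ⟨Ux, hUxo, hUxs, hUx1⟩ := hgx1
  obtain ⟨Uψ, hUψo, hUψs, hUψ1⟩ := hψ1
  obtain ⟨Uy, hUyo, hUys, hUy1⟩ := hgy1
  have hφ'cont : Continuous fun y => |y * deriv φ y| :=
    (continuous_id.mul (hφ.continuous_deriv (mod_cast le_top))).abs
  -- 0 is not in the support of deriv χt
  have h0χ : (0 : ℝ) ∉ tsupport (deriv χt) := by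
    obtain ⟨V, hV1, hVo, hV0⟩ := eventually_nhds_iff.1 hχt1
    have hz : ∀ z ∈ V, deriv χt z = 0 := fun z hzV => by
      have heq : χt =ᶠ[nhds z] fun _ => 1 :=
        Filter.eventually_of_mem (hVo.mem_nhds hzV) hV1
      rw [heq.deriv_eq, deriv_const]
    have hsub : tsupport (deriv χt) ⊆ Vᶜ :=
      closure_minimal (fun z hzs hzV => Function.mem_support.1 hzs (hz z hzV))
        hVo.isClosed_compl
    exact fun hmem => (hsub hmem) hV0
  obtain ⟨c₁, hc₁, hc₁lb⟩ := exists_pos_lb hφ'cont hχtc.deriv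
    (fun y hy => abs_pos.2 (mul_ne_zero (fun h0 => h0χ (h0 ▸ hy)) (hφχ y hy)))
  -- 0 is not in the support of deriv gy
  have h0y : (0 : ℝ) ∈ Uy := hUys (subset_tsupport χt
    (Function.mem_support.2 (by rw [hχt1.self_of_nhds]; exact one_ne_zero)))
  have h0gy : (0 : ℝ) ∉ tsupport (deriv gy) := by
    have hsub : tsupport (deriv gy) ⊆ Uyᶜ :=
      closure_minimal (fun z hzs hzU => Function.mem_support.1 hzs
        (deriv_eq_zero_of_locally_one hUyo hUy1 hzU)) hUyo.isClosed_compl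
    exact fun hmem => (hsub hmem) h0y
  obtain ⟨c₂, hc₂, hc₂lb⟩ := exists_pos_lb hφ'cont hgyc.deriv
    (fun y hy => abs_pos.2 (mul_ne_zero (fun h0 => h0gy (h0 ▸ hy)) (hgy' y hy)))
  have hyφ := yphi_nonpos φ hφ.continuous hφ01 hφ'
  have hψgx : ∀ x, gx x ≠ 0 → ψ x = 1 := fun x hx =>
    hUψ1 x (hUψs (subset_tsupport gx (Function.mem_support.2 hx)))
  have hgxmem : ∀ x', x' ∈ tsupport R₀ ∪ tsupport R₁ → gx x' = 1 :=
    fun x' h => hUx1 x' (hUxs h)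
  have hdgxmem : ∀ x', x' ∈ tsupport R₀ ∪ tsupport R₁ → deriv gx x' = 0 :=
    fun x' h => deriv_eq_zero_of_locally_one hUxo hUx1 (hUxs h)
  have hgyχ : ∀ y', χt y' ≠ 0 → gy y' = 1 := fun y' h =>
    hUy1 y' (hUys (subset_tsupport χt (Function.mem_support.2 h)))
  have hc₁sq : (0 : ℝ) < c₁ ^ 2 := pow_pos hc₁ 2
  -- choice of lam0
  refine ⟨2 + (4 + 2 * B₀)
    + (4 * (2 * K * B₀ + 4 * K * B₁ ^ 2) * c₁ + 4 * (2 * K * B₁) ^ 2 + 1) / c₁ ^ 2, ?_⟩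
  intro lam hlam
  have hdivnn : 0 ≤ (4 * (2 * K * B₀ + 4 * K * B₁ ^ 2) * c₁ + 4 * (2 * K * B₁) ^ 2 + 1) / c₁ ^ 2 :=
    div_nonneg (by positivity) hc₁sq.le
  have hlam2 : 2 ≤ lam := by linarith only [hlam, hdivnn, hB₀0]
  have hlam1 : 1 ≤ lam := by linarith only [hlam, hdivnn, hB₀0]
  have hlam0 : 0 ≤ lam := by linarith only [hlam, hdivnn, hB₀0]
  have hlamm : (0:ℝ) ≤ lam - 1 := by linarith only [hlam1]
  obtain ⟨S, hSd⟩ : ∃ t : ℝ, t = Real.sqrt (lam + 4 + 2 * B₀) := ⟨_, rfl⟩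
  have hS0 : 0 ≤ S := hSd ▸ Real.sqrt_nonneg _
  have hs : S ^ 2 = lam + 4 + 2 * B₀ := by
    rw [hSd]; exact Real.sq_sqrt (by linarith only [hlam0, hB₀0])
  obtain ⟨Ξ, hΞd⟩ : ∃ t : ℝ, t = 2 * B₁ + S := ⟨_, rfl⟩
  have hΞ0 : 0 ≤ Ξ := by rw [hΞd]; linarith only [hS0, hB₁0]
  obtain ⟨H, hHd⟩ : ∃ t : ℝ, t = Real.sqrt (lam + 4 + 2 * B₀ + 2 * B₁ * Ξ) := ⟨_, rfl⟩
  have hH0 : 0 ≤ H := hHd ▸ Real.sqrt_nonneg _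
  have hm0 : 0 ≤ B₀ + Ξ * B₁ := add_nonneg hB₀0 (mul_nonneg hΞ0 hB₁0)
  -- key largeness property of lam
  have hlamkey : 2 * K * (B₀ + Ξ * B₁) ≤ (lam - 1) * c₁ / 2 := by
    have hdiv : c₁ ^ 2 * ((4 * (2 * K * B₀ + 4 * K * B₁ ^ 2) * c₁ + 4 * (2 * K * B₁) ^ 2 + 1)
        / c₁ ^ 2) = 4 * (2 * K * B₀ + 4 * K * B₁ ^ 2) * c₁ + 4 * (2 * K * B₁) ^ 2 + 1 := by
      field_simp
    have hmul : c₁ ^ 2 * (2 + (4 + 2 * B₀))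
        + (4 * (2 * K * B₀ + 4 * K * B₁ ^ 2) * c₁ + 4 * (2 * K * B₁) ^ 2 + 1)
        ≤ c₁ ^ 2 * lam := by
      have h := mul_le_mul_of_nonneg_left hlam hc₁sq.le
      linarith only [hdiv, h]
    have hkey := lamkey_aux K B₀ B₁ c₁ lam S hK0 hB₀0 hB₁0 hc₁ hS0 hs hmul
    rw [hΞd]
    linarith only [hkey]
  -- choice of δ₀
  have hden : (0 : ℝ) < 2 * X * Ξ * H * K₂ + 1 := by
    have hprod : 0 ≤ 2 * X * Ξ * H * K₂ :=
      mul_nonneg (mul_nonneg (mul_nonneg (mul_nonneg (by norm_num) hX0) hΞ0) hH0) hK₂0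
    linarith only [hprod]
  have hnum : (0 : ℝ) < (lam - 1) * c₂ / 2 :=
    div_pos (mul_pos (by linarith only [hlam2]) hc₂) two_pos
  have hδ₀nonneg : 0 ≤ (lam - 1) * c₂ / 2 / (2 * X * Ξ * H * K₂ + 1) :=
    (div_pos hnum hden).le
  refine ⟨(lam - 1) * c₂ / 2 / (2 * X * Ξ * H * K₂ + 1), div_pos hnum hden, ?_⟩
  intro δ hδ0 hδδ x y ξ η hdet
  have hδ₀eq : (lam - 1) * c₂ / 2 / (2 * X * Ξ * H * K₂ + 1) * (2 * X * Ξ * H * K₂ + 1)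
      = (lam - 1) * c₂ / 2 := div_mul_cancel₀ _ (ne_of_gt hden)
  -- bounds on ξ and η from det p = 0
  have hb := xi_eta_bound R₀ R₁ ψ φ χt lam B₀ B₁ hB₀ hB₁ hψ01 hφ01 hχt01 hlam0 x y ξ η hdet
  have hxiΞ : |ξ| ≤ Ξ := by
    rw [hΞd]
    have ht2 : |ξ| ^ 2 ≤ S ^ 2 + 2 * B₁ * |ξ| := by
      rw [hs]
      linarith only [sq_abs ξ, sq_nonneg η, hb]
    by_contra hcon
    push_neg at hcon
    have habspos : 0 < |ξ| :=
      lt_of_le_of_lt (by linarith only [hS0, hB₁0] : (0:ℝ) ≤ 2 * B₁ + S) hcon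
    linarith only [mul_pos habspos (by linarith only [hcon] : (0:ℝ) < |ξ| - 2 * B₁ - S),
      mul_nonneg hS0 (by linarith only [hcon] : (0:ℝ) ≤ |ξ| - 2 * B₁ - S),
      mul_nonneg hB₁0 hS0, ht2]
  have hetaH : |η| ≤ H := by
    rw [hHd]
    refine Real.abs_le_sqrt ?_
    linarith only [mul_le_mul_of_nonneg_left hxiΞ hB₁0, hb, sq_nonneg ξ]
  -- pointwise scalar facts
  have habs : |y * deriv φ y| = -(y * deriv φ y) := abs_of_nonpos (hyφ y)
  have h1G : 0 ≤ 1 - gx x * gy y := by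
    linarith only [mul_le_mul (hgx01 x).2 (hgy01 y).2 (hgy01 y).1 zero_le_one]
  have hN1 : 0 ≤ -(2 * δ * x * ξ ^ 2 * (deriv gx x * gy y)) := by
    linarith only [mul_nonneg (mul_nonneg (mul_nonneg hδ0.le (sq_nonneg ξ))
      (neg_nonneg.2 (hgx' x))) (hgy01 y).1]
  have hN2 : 0 ≤ -(lam * φ y * deriv ψ x * (δ * x * (1 - gx x * gy y))) := by
    linarith only [mul_nonneg (mul_nonneg (mul_nonneg (mul_nonneg hlam0 (hφ01 y).1) hδ0.le)
      (neg_nonneg.2 (hψ' x))) h1G]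
  have hRHSnn : 0 ≤ (lam - 1) * (|y * deriv φ y| * ψ x) / 2 := by
    linarith only [mul_nonneg (mul_nonneg hlamm
      (abs_nonneg (y * deriv φ y))) (hψ01 x).1]
  have hP1bound : |2 * δ * x * ξ * η * (gx x * deriv gy y)|
      ≤ (lam - 1) * (|y * deriv φ y| * ψ x) / 2 := by
    rcases eq_or_ne (gx x) 0 with hg0 | hg0
    · simp only [hg0, zero_mul, mul_zero, abs_zero]
      exact hRHSnn
    rcases eq_or_ne (deriv gy y) 0 with hd0 | hd0
    · simp only [hd0, mul_zero, abs_zero]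
      exact hRHSnn
    have hψ1x : ψ x = 1 := hψgx x hg0
    have hyc₂ : c₂ ≤ |y * deriv φ y| :=
      hc₂lb y (subset_tsupport _ (Function.mem_support.2 hd0))
    have e1 : |2 * δ * x * ξ * η * (gx x * deriv gy y)|
        = 2 * δ * (|x * gx x| * (|ξ| * (|η| * |deriv gy y|))) := by
      rw [show 2 * δ * x * ξ * η * (gx x * deriv gy y)
          = 2 * δ * ((x * gx x) * (ξ * (η * deriv gy y))) from by ring,
        abs_mul (2 * δ), abs_mul (x * gx x), abs_mul ξ, abs_mul η,
        abs_of_pos (by linarith only [hδ0] : (0:ℝ) < 2 * δ)]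
    rw [e1, hψ1x]
    have step1 : 2 * δ * (|x * gx x| * (|ξ| * (|η| * |deriv gy y|)))
        ≤ 2 * δ * (X * (Ξ * (H * K₂))) := by
      gcongr <;> first
        | exact hX x
        | exact hxiΞ
        | exact hetaH
        | exact hK₂ y
        | exact hX0
        | exact hΞ0
        | exact hH0
        | exact hK₂0
        | positivity
    have step2 : 2 * δ * (X * (Ξ * (H * K₂))) ≤ (lam - 1) * c₂ / 2 := by
      have hq : δ * (2 * (X * (Ξ * (H * K₂)))) ≤ δ * (2 * X * Ξ * H * K₂ + 1) :=
        mul_le_mul_of_nonneg_left (by linarith only []) hδ0.le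
      have h2 : δ * (2 * X * Ξ * H * K₂ + 1)
          ≤ (lam - 1) * c₂ / 2 / (2 * X * Ξ * H * K₂ + 1) * (2 * X * Ξ * H * K₂ + 1) :=
        mul_le_mul_of_nonneg_right hδδ hden.le
      linarith only [hq, h2, hδ₀eq]
    have step3 : (lam - 1) * c₂ / 2 ≤ (lam - 1) * (|y * deriv φ y| * 1) / 2 := by
      linarith only [mul_le_mul_of_nonneg_left hyc₂ hlamm]
    linarith only [step1, step2, step3]
  have hNlam : -(lam * y * deriv φ y * ψ x) - |y * deriv φ y| * ψ x
      = (lam - 1) * (|y * deriv φ y| * ψ x) := by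
    rw [habs]; ring
  -- the matrix identity
  obtain ⟨sv, hsv⟩ : ∃ t : ℝ, t = -(2 * δ * x * ξ ^ 2 * (deriv gx x * gy y))
      - 2 * δ * x * ξ * η * (gx x * deriv gy y)
      - lam * φ y * deriv ψ x * (δ * x * (1 - gx x * gy y))
      - lam * y * deriv φ y * ψ x - |y * deriv φ y| * ψ x := ⟨_, rfl⟩
  obtain ⟨tv, htv⟩ : ∃ t : ℝ, t = -(y * deriv χt y) := ⟨_, rfl⟩
  have hMeq : matPB (pSym R₀ R₁ ψ φ χt lam)
      (fun x y ξ η => y * η + δ * x * ξ * (1 - gx x * gy y)) x y ξ η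
      - (2 * η ^ 2 + 2 * δ * ξ ^ 2 * (1 - gx x * gy y) + |y * deriv φ y| * ψ x) • (1 : M2)
      = sv • (1 : M2) + tv • (R₀ x + ξ • R₁ x) := by
    ext i j
    simp only [Matrix.sub_apply, matPB, Matrix.of_apply, Matrix.add_apply, Matrix.smul_apply,
      smul_eq_mul]
    rw [deriv_p_xi R₀ R₁ ψ φ χt lam x y ξ η i j,
      deriv_p_eta R₀ R₁ ψ φ χt lam x y ξ η i j,
      deriv_p_x R₀ R₁ ψ φ χt lam x y ξ η i j hR₀ hR₁ hψ,
      deriv_p_y R₀ R₁ ψ φ χt lam x y ξ η i j hφ hχt,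
      deriv_g_x gx gy δ x y ξ η hgx,
      deriv_g_y gx gy δ x y ξ η hgy,
      deriv_g_xi gx gy δ x y ξ η,
      deriv_g_eta gx gy δ x y ξ η]
    have hZ1 : χt y * R₁ x i j * (1 - gx x * gy y) = 0 := by
      rcases eq_or_ne (χt y) 0 with h | h
      · rw [h]; ring
      rcases eq_or_ne (R₁ x i j) 0 with h1 | h1
      · rw [h1]; ring
      have hx1 : x ∈ tsupport R₀ ∪ tsupport R₁ :=
        Or.inr (subset_tsupport R₁ (Function.mem_support.2 fun hc => h1 (by simp [hc])))
      rw [hgxmem x hx1, hgyχ y h]; ring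
    have hZ2 : R₁ x i j * deriv gx x = 0 := by
      rcases eq_or_ne (R₁ x i j) 0 with h1 | h1
      · rw [h1]; ring
      have hx1 : x ∈ tsupport R₀ ∪ tsupport R₁ :=
        Or.inr (subset_tsupport R₁ (Function.mem_support.2 fun hc => h1 (by simp [hc])))
      rw [hdgxmem x hx1]; ring
    have hZ3 : χt y * deriv (fun x => R₀ x i j) x * (1 - gx x * gy y) = 0 := by
      rcases eq_or_ne (χt y) 0 with h | h
      · rw [h]; ring
      rcases eq_or_ne (deriv (fun x => R₀ x i j) x) 0 with h1 | h1
      · rw [h1]; ring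
      have hx1 : x ∈ tsupport R₀ ∪ tsupport R₁ := by
        left
        by_contra hxn
        exact h1 (deriv_entry_eq_zero hxn i j)
      rw [hgxmem x hx1, hgyχ y h]; ring
    have hZ4 : χt y * deriv (fun x => R₁ x i j) x * (1 - gx x * gy y) = 0 := by
      rcases eq_or_ne (χt y) 0 with h | h
      · rw [h]; ring
      rcases eq_or_ne (deriv (fun x => R₁ x i j) x) 0 with h1 | h1
      · rw [h1]; ring
      have hx1 : x ∈ tsupport R₀ ∪ tsupport R₁ := by
        right
        by_contra hxn
        exact h1 (deriv_entry_eq_zero hxn i j)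
      rw [hgxmem x hx1, hgyχ y h]; ring
    rw [hsv, htv]
    linear_combination (δ * ξ) * hZ1 - (δ * x * ξ * gy y * χt y) * hZ2
      - (δ * x) * hZ3 - (δ * x * ξ) * hZ4
  rw [hMeq]
  by_cases hR00 : R₀ x = 0 ∧ R₁ x = 0
  · -- both matrices vanish at x
    have hsval : 0 ≤ sv := by
      rw [hsv]
      have hpb := abs_le.1 hP1bound
      linarith only [hN1, hN2, hNlam, hRHSnn, hpb.1, hpb.2]
    refine psd_aux sv tv 0 (R₀ x + ξ • R₁ x) ((hR₀s x).add ((hR₁s x).smul ξ)) ?_ (by linarith only [hsval])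
    intro i j
    rw [hR00.1, hR00.2]
    simp
  · -- x is in the support of R₀ or R₁
    have hxsupp : x ∈ tsupport R₀ ∪ tsupport R₁ := by
      rcases not_and_or.1 hR00 with h | h
      · exact Or.inl (subset_tsupport R₀ (Function.mem_support.2 h))
      · exact Or.inr (subset_tsupport R₁ (Function.mem_support.2 h))
    have hψx1 : ψ x = 1 := hψgx x (by rw [hgxmem x hxsupp]; exact one_ne_zero)
    have hP2bound : 2 * (|tv| * (B₀ + Ξ * B₁)) ≤ (lam - 1) * (|y * deriv φ y| * ψ x) / 2 := by
      rcases eq_or_ne (deriv χt y) 0 with h | h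
      · rw [htv, h]
        simp only [mul_zero, neg_zero, abs_zero, zero_mul]
        linarith only [hRHSnn]
      have hyc₁ : c₁ ≤ |y * deriv φ y| :=
        hc₁lb y (subset_tsupport _ (Function.mem_support.2 h))
      have htK : |tv| ≤ K := by rw [htv, abs_neg]; exact hK y
      have st1 : 2 * (|tv| * (B₀ + Ξ * B₁)) ≤ 2 * K * (B₀ + Ξ * B₁) := by
        linarith only [mul_le_mul_of_nonneg_right htK hm0]
      have st3 : (lam - 1) * c₁ / 2 ≤ (lam - 1) * (|y * deriv φ y| * ψ x) / 2 := by
        rw [hψx1]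
        linarith only [mul_le_mul_of_nonneg_left hyc₁ hlamm]
      linarith only [st1, st3, hlamkey]
    have haij : ∀ i j, |R₀ x i j + ξ * R₁ x i j| ≤ B₀ + Ξ * B₁ := by
      intro i j
      calc |R₀ x i j + ξ * R₁ x i j| ≤ |R₀ x i j| + |ξ * R₁ x i j| := abs_add_le _ _
        _ = |R₀ x i j| + |ξ| * |R₁ x i j| := by rw [abs_mul]
        _ ≤ B₀ + Ξ * B₁ := by
            have h2 := mul_le_mul hxiΞ (hB₁ x i j) (abs_nonneg _) hΞ0
            linarith only [h2, hB₀ x i j]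
    have hsval : 2 * (|tv| * (B₀ + Ξ * B₁)) ≤ sv := by
      rw [hsv]
      have hpb := abs_le.1 hP1bound
      linarith only [hN1, hN2, hNlam, hP2bound, hpb.1, hpb.2]
    refine psd_aux sv tv (|tv| * (B₀ + Ξ * B₁)) (R₀ x + ξ • R₁ x)
      ((hR₀s x).add ((hR₁s x).smul ξ)) ?_ hsval
    intro i j
    have hent : (R₀ x + ξ • R₁ x) i j = R₀ x i j + ξ * R₁ x i j := by
      simp [Matrix.add_apply, Matrix.smul_apply]
    rw [hent, abs_mul]
    exact mul_le_mul_of_nonneg_left (haij i j) (abs_nonneg tv)
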